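/- Let D ∈ ℂ^{N×N} be Hermitian positive definite and let C ∈ ℂ^{N×N} be a nonzero matrix with ν_D(C) := inf_{0≠x∈ℂ^N} |(Cx,x)_D| / (x,x)_D > 0. Then for every r₀ ∈ ℂ^N and every natural number n there exists a polynomial p ∈ ℂ[X] with deg p ≤ n and p(0) = 1 such that ‖p(C) r₀‖_D ≤ (1 − ν_D(C)² / ‖C‖_D²)^{n/2} ‖r₀‖_D. (Elman's field-of-values residual bound for GMRES in the D-inner product: the GMRES residual r_n satisfies ‖r_n‖_D / ‖r₀‖_D ≤ (1 − ν_D(C)²/‖C‖_D²)^{n/2}, since r_n minimizes ‖p(C)r₀‖_D over such polynomials.) -/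

import Mathlib

/-!
One step of the iteration is a minimal-residual step of degree one: for any `x` there is `α` with
`‖x - α Cx‖_D² ≤ (1 - ν²/‖C‖²) ‖x‖_D²`, obtained by expanding the square and taking `α` along the
conjugate of `(Cx,x)_D`, whose modulus is at least `ν ‖x‖_D²`. Applying this to `x = p(C) r₀`
and multiplying `p` by `1 - αX` gains one degree and one factor `1 - ν²/‖C‖²` in the squared norm.
-/

open Matrix
open scoped ComplexOrder

noncomputable section

/-- The `D`-inner product `(x,y)_D = y* D x` on `ℂ^N`. -/
def dip {N : ℕ} (D : Matrix (Fin N) (Fin N) ℂ) (x y : Fin N → ℂ) : ℂ :=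
  star y ⬝ᵥ (D *ᵥ x)

/-- The norm induced by `D`: `‖x‖_D = ((x,x)_D)^{1/2}`. -/
def dnorm {N : ℕ} (D : Matrix (Fin N) (Fin N) ℂ) (x : Fin N → ℂ) : ℝ :=
  Real.sqrt (dip D x x).re

/-- The operator norm induced by the `D`-norm. -/
def dopNorm {N : ℕ} (D C : Matrix (Fin N) (Fin N) ℂ) : ℝ :=
  ⨆ x : {x : Fin N → ℂ // x ≠ 0}, dnorm D (C *ᵥ x.1) / dnorm D x.1

/-- `ν_D(C) = inf_{x ≠ 0} |(Cx,x)_D| / (x,x)_D`. -/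
def dnu {N : ℕ} (D C : Matrix (Fin N) (Fin N) ℂ) : ℝ :=
  ⨅ x : {x : Fin N → ℂ // x ≠ 0},
    ‖dip D (C *ᵥ x.1) x.1‖ / (dip D x.1 x.1).re

section DInnerProduct

variable {N : ℕ} {D : Matrix (Fin N) (Fin N) ℂ}

lemma dip_sub_left (x x' y : Fin N → ℂ) : dip D (x - x') y = dip D x y - dip D x' y := by
  simp [dip, mulVec_sub, dotProduct_sub]

lemma dip_sub_right (x y y' : Fin N → ℂ) : dip D x (y - y') = dip D x y - dip D x y' := by
  simp [dip, sub_dotProduct]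

lemma dip_smul_left (a : ℂ) (x y : Fin N → ℂ) : dip D (a • x) y = a * dip D x y := by
  simp [dip, mulVec_smul, dotProduct_smul, smul_eq_mul]

lemma dip_smul_right (a : ℂ) (x y : Fin N → ℂ) : dip D x (a • y) = star a * dip D x y := by
  simp [dip, star_smul, smul_dotProduct, smul_eq_mul]

lemma dip_swap (hD : D.IsHermitian) (x y : Fin N → ℂ) :
    dip D y x = star (dip D x y) := by
  rw [dip, dip, star_dotProduct, star_mulVec, dotProduct_mulVec, hD.eq]

lemma dip_self_re_pos (hD : D.PosDef) {x : Fin N → ℂ} (hx : x ≠ 0) :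
    0 < (dip D x x).re :=
  hD.re_dotProduct_pos hx

lemma dip_self_re_nonneg (hD : D.PosDef) (x : Fin N → ℂ) : 0 ≤ (dip D x x).re :=
  hD.posSemidef.re_dotProduct_nonneg x

lemma dnorm_sq (hD : D.PosDef) (x : Fin N → ℂ) : dnorm D x ^ 2 = (dip D x x).re :=
  Real.sq_sqrt (dip_self_re_nonneg hD x)

lemma dnorm_pos (hD : D.PosDef) {x : Fin N → ℂ} (hx : x ≠ 0) : 0 < dnorm D x :=
  Real.sqrt_pos.mpr (dip_self_re_pos hD hx)

lemma dnorm_nonneg (x : Fin N → ℂ) : 0 ≤ dnorm D x := Real.sqrt_nonneg _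

lemma dnorm_smul (a : ℂ) (x : Fin N → ℂ) : dnorm D (a • x) = ‖a‖ * dnorm D x := by
  rw [dnorm, dip_smul_left, dip_smul_right, ← mul_assoc, Complex.star_def, Complex.mul_conj,
    Complex.re_ofReal_mul, Real.sqrt_mul (Complex.normSq_nonneg a), ← Complex.norm_def, dnorm]

lemma dnorm_sub_smul_sq (hD : D.PosDef) (α : ℂ) (x y : Fin N → ℂ) :
    dnorm D (x - α • y) ^ 2
      = dnorm D x ^ 2 - 2 * (α * dip D y x).re + ‖α‖ ^ 2 * dnorm D y ^ 2 := by
  have hexpand : dip D (x - α • y) (x - α • y)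
      = dip D x x - star (α * dip D y x) - α * dip D y x + (α * star α) * dip D y y := by
    rw [dip_sub_left, dip_sub_right, dip_sub_right, dip_smul_left, dip_smul_right,
      dip_smul_right, dip_smul_left, dip_swap hD.isHermitian y x, star_mul']
    ring
  rw [dnorm_sq hD, dnorm_sq hD, dnorm_sq hD, hexpand, Complex.star_def, Complex.mul_conj,
    ← Complex.sq_norm]
  simp only [Complex.sub_re, Complex.add_re, Complex.conj_re, Complex.re_ofReal_mul]
  ring

lemma continuous_dnorm : Continuous (dnorm D) := by
  unfold dnorm dip; fun_prop

end DInnerProduct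

section OperatorNormAndNu

variable {N : ℕ} {D : Matrix (Fin N) (Fin N) ℂ} (C : Matrix (Fin N) (Fin N) ℂ)

lemma dnorm_mulVec_smul_div {c : ℂ} (hc : c ≠ 0) (x : Fin N → ℂ) :
    dnorm D (C *ᵥ (c • x)) / dnorm D (c • x) = dnorm D (C *ᵥ x) / dnorm D x := by
  rw [mulVec_smul, dnorm_smul, dnorm_smul, mul_div_mul_left _ _ (norm_ne_zero_iff.mpr hc)]

/-- The quotient is scale invariant, so its range is the image of the compact unit sphere. -/
lemma bddAbove_range_dnorm_mulVec_div (hD : D.PosDef) :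
    BddAbove (Set.range fun x : {x : Fin N → ℂ // x ≠ 0} => dnorm D (C *ᵥ x.1) / dnorm D x.1) := by
  let g : (Fin N → ℂ) → ℝ := fun x => dnorm D (C *ᵥ x) / dnorm D x
  have hg : ContinuousOn g (Metric.sphere 0 1) := by
    refine (continuous_dnorm.comp (by fun_prop)).continuousOn.div continuous_dnorm.continuousOn
      fun x hx => (dnorm_pos hD (ne_zero_of_mem_unit_sphere ⟨x, hx⟩)).ne'
  obtain ⟨B, hB⟩ := ((isCompact_sphere 0 1).image_of_continuousOn hg).bddAbove
  refine ⟨B, ?_⟩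
  rintro _ ⟨⟨x, hx⟩, rfl⟩
  have hxn : (‖x‖ : ℂ) ≠ 0 := Complex.ofReal_ne_zero.mpr (norm_ne_zero_iff.mpr hx)
  have hmem : (‖x‖ : ℂ)⁻¹ • x ∈ Metric.sphere (0 : Fin N → ℂ) 1 := by
    simp [norm_smul, hx]
  simpa only [g, dnorm_mulVec_smul_div C (inv_ne_zero hxn)] using hB ⟨_, hmem, rfl⟩

lemma dnorm_mulVec_le (hD : D.PosDef) (x : Fin N → ℂ) :
    dnorm D (C *ᵥ x) ≤ dopNorm D C * dnorm D x := by
  rcases eq_or_ne x 0 with rfl | hx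
  · simp [dnorm, dip]
  · rw [← div_le_iff₀ (dnorm_pos hD hx)]
    exact le_ciSup (bddAbove_range_dnorm_mulVec_div C hD) ⟨x, hx⟩

lemma dnu_mul_le (hD : D.PosDef) {x : Fin N → ℂ} (hx : x ≠ 0) :
    dnu D C * (dip D x x).re ≤ ‖dip D (C *ᵥ x) x‖ := by
  rw [← le_div_iff₀ (dip_self_re_pos hD hx)]
  refine ciInf_le ⟨0, ?_⟩ (⟨x, hx⟩ : {x : Fin N → ℂ // x ≠ 0})
  rintro _ ⟨y, rfl⟩
  exact div_nonneg (norm_nonneg _) (dip_self_re_nonneg hD _)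

lemma exists_ne_zero_of_dnu_pos (hν : 0 < dnu D C) : ∃ x : Fin N → ℂ, x ≠ 0 := by
  by_contra! h
  have : IsEmpty {x : Fin N → ℂ // x ≠ 0} := ⟨fun x => x.2 (h x.1)⟩
  simp [dnu] at hν

lemma dopNorm_pos (hD : D.PosDef) (hν : 0 < dnu D C) : 0 < dopNorm D C := by
  obtain ⟨x, hx⟩ := exists_ne_zero_of_dnu_pos C hν
  have hdip : 0 < ‖dip D (C *ᵥ x) x‖ :=
    (mul_pos hν (dip_self_re_pos hD hx)).trans_le (dnu_mul_le C hD hx)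
  have hCx : C *ᵥ x ≠ 0 := by
    rintro h
    simp [h, dip] at hdip
  exact pos_of_mul_pos_left ((dnorm_pos hD hCx).trans_le (dnorm_mulVec_le C hD x)) (dnorm_nonneg x)

end OperatorNormAndNu

section Residual

variable {N : ℕ} {D C : Matrix (Fin N) (Fin N) ℂ}

/-- With `z = (Cx,x)_D` and `t = ν/‖C‖²`, the step `α = t z̄/|z|` makes `2 Re(α z) = 2t|z| ≥ 2tν‖x‖²`,
while `|α|²‖Cx‖² ≤ t²‖C‖²‖x‖²`; and `1 - 2tν + t²‖C‖² = 1 - ν²/‖C‖²`. -/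
lemma exists_dnorm_sub_smul_mulVec_sq_le (hD : D.PosDef) (hν : 0 < dnu D C) (x : Fin N → ℂ) :
    ∃ α : ℂ, dnorm D (x - α • (C *ᵥ x)) ^ 2
      ≤ (1 - dnu D C ^ 2 / dopNorm D C ^ 2) * dnorm D x ^ 2 := by
  rcases eq_or_ne x 0 with rfl | hx
  · exact ⟨0, by simp [dnorm, dip]⟩
  set ν := dnu D C
  set M := dopNorm D C
  set z := dip D (C *ᵥ x) x
  have hM : 0 < M := dopNorm_pos C hD hν
  have hνz : ν * dnorm D x ^ 2 ≤ ‖z‖ := by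
    rw [dnorm_sq hD]
    exact dnu_mul_le C hD hx
  have hz : 0 < ‖z‖ := (mul_pos hν (pow_pos (dnorm_pos hD hx) 2)).trans_le hνz
  set t : ℝ := ν / M ^ 2
  refine ⟨(t / ‖z‖ : ℝ) * star z, ?_⟩
  have hαz : ((t / ‖z‖ : ℝ) * star z * z).re = t * ‖z‖ := by
    rw [mul_assoc, Complex.star_def, mul_comm _ z, Complex.mul_conj, ← Complex.ofReal_mul,
      Complex.ofReal_re, Complex.normSq_eq_norm_sq]
    field_simp
  have hα : ‖((t / ‖z‖ : ℝ) : ℂ) * star z‖ = t := by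
    rw [norm_mul, Complex.norm_real, norm_star, Real.norm_of_nonneg (by positivity)]
    field_simp
  have hCx : dnorm D (C *ᵥ x) ^ 2 ≤ M ^ 2 * dnorm D x ^ 2 := by
    rw [← mul_pow]
    exact pow_le_pow_left₀ (dnorm_nonneg _) (dnorm_mulVec_le C hD x) 2
  calc dnorm D (x - ((t / ‖z‖ : ℝ) * star z) • (C *ᵥ x)) ^ 2
      = dnorm D x ^ 2 - 2 * (t * ‖z‖) + t ^ 2 * dnorm D (C *ᵥ x) ^ 2 := by
        rw [dnorm_sub_smul_sq hD, hαz, hα]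
    _ ≤ dnorm D x ^ 2 - 2 * (t * (ν * dnorm D x ^ 2)) + t ^ 2 * (M ^ 2 * dnorm D x ^ 2) := by
        gcongr
    _ = (1 - ν ^ 2 / M ^ 2) * dnorm D x ^ 2 := by
        simp only [t]
        field_simp
        ring

lemma one_sub_dnu_sq_div_dopNorm_sq_nonneg (hD : D.PosDef) (hν : 0 < dnu D C) :
    0 ≤ 1 - dnu D C ^ 2 / dopNorm D C ^ 2 := by
  obtain ⟨x, hx⟩ := exists_ne_zero_of_dnu_pos C hν
  obtain ⟨α, hα⟩ := exists_dnorm_sub_smul_mulVec_sq_le hD hν x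
  exact nonneg_of_mul_nonneg_left ((sq_nonneg _).trans hα) (pow_pos (dnorm_pos hD hx) 2)

end Residual

lemma aeval_one_sub_C_mul_X_mul_mulVec {n R : Type*} [Fintype n] [DecidableEq n] [CommRing R]
    (A : Matrix n n R) (α : R) (p : Polynomial R) (v : n → R) :
    Polynomial.aeval A ((1 - Polynomial.C α * Polynomial.X) * p) *ᵥ v
      = Polynomial.aeval A p *ᵥ v - α • (A *ᵥ (Polynomial.aeval A p *ᵥ v)) := by
  simp [sub_mul, sub_mulVec, ← mulVec_mulVec, Algebra.algebraMap_eq_smul_one, smul_mulVec]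

lemma exists_poly_dnorm_sq_le {N : ℕ} {D C : Matrix (Fin N) (Fin N) ℂ} (hD : D.PosDef)
    (hν : 0 < dnu D C) (r₀ : Fin N → ℂ) (n : ℕ) :
    ∃ p : Polynomial ℂ, p.natDegree ≤ n ∧ p.eval 0 = 1 ∧
      dnorm D (Polynomial.aeval C p *ᵥ r₀) ^ 2
        ≤ (1 - dnu D C ^ 2 / dopNorm D C ^ 2) ^ n * dnorm D r₀ ^ 2 := by
  induction n with
  | zero => exact ⟨1, by simp, by simp, by simp⟩
  | succ n ih =>
    obtain ⟨p, hdeg, hp0, hp⟩ := ih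
    obtain ⟨α, hα⟩ := exists_dnorm_sub_smul_mulVec_sq_le hD hν (Polynomial.aeval C p *ᵥ r₀)
    refine ⟨(1 - Polynomial.C α * Polynomial.X) * p, ?_, by simp [hp0], ?_⟩
    · refine Polynomial.natDegree_mul_le.trans ?_
      rw [add_comm n]
      gcongr
      compute_degree
    · rw [aeval_one_sub_C_mul_X_mul_mulVec]
      have hq := one_sub_dnu_sq_div_dopNorm_sq_nonneg hD hν
      exact hα.trans ((mul_le_mul_of_nonneg_left hp hq).trans_eq (by ring))

theorem stmt_2_general (N : ℕ) (D C : Matrix (Fin N) (Fin N) ℂ) (hD : D.PosDef)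
    (hν : 0 < dnu D C) (r₀ : Fin N → ℂ) (n : ℕ) :
    ∃ p : Polynomial ℂ, p.natDegree ≤ n ∧ p.eval 0 = 1 ∧
      dnorm D ((Polynomial.aeval C p) *ᵥ r₀)
        ≤ Real.rpow (1 - (dnu D C) ^ 2 / (dopNorm D C) ^ 2) ((n : ℝ) / 2)
            * dnorm D r₀ := by
  obtain ⟨p, hdeg, hp0, hp⟩ := exists_poly_dnorm_sq_le hD hν r₀ n
  refine ⟨p, hdeg, hp0, ?_⟩
  have hq := one_sub_dnu_sq_div_dopNorm_sq_nonneg hD hν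
  have hrpow : ((1 - dnu D C ^ 2 / dopNorm D C ^ 2) ^ ((n : ℝ) / 2)) ^ 2
      = (1 - dnu D C ^ 2 / dopNorm D C ^ 2) ^ n := by
    rw [← Real.rpow_mul_natCast hq]
    norm_num
  refine (pow_le_pow_iff_left₀ (dnorm_nonneg _)
    (mul_nonneg (Real.rpow_nonneg hq _) (dnorm_nonneg _)) two_ne_zero).mp ?_
  rwa [mul_pow, hrpow]

/-- Elman's field-of-values residual bound for GMRES in the `D`-inner
product: for each `n` there is a polynomial `p` with `deg p ≤ n`, `p(0) = 1` and
`‖p(C) r₀‖_D ≤ (1 − ν_D(C)²/‖C‖_D²)^{n/2} ‖r₀‖_D`. -/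
theorem stmt_2 (N : ℕ) (D C : Matrix (Fin N) (Fin N) ℂ) (hD : D.PosDef)
    (hC : C ≠ 0) (hν : 0 < dnu D C) (r₀ : Fin N → ℂ) (n : ℕ) :
    ∃ p : Polynomial ℂ, p.natDegree ≤ n ∧ p.eval 0 = 1 ∧
      dnorm D ((Polynomial.aeval C p) *ᵥ r₀)
        ≤ Real.rpow (1 - (dnu D C) ^ 2 / (dopNorm D C) ^ 2) ((n : ℝ) / 2)
            * dnorm D r₀ :=
  stmt_2_general N D C hD hν r₀ n

end
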